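/- arXiv:1610.07576 — 2 statements merged into one kernel-verified Lean document; each statement's English description precedes it below -/
import Mathlib

section
/- Under any scaling satisfying the scaling condition Λ_m(n) = c_n (log n)/n with lim_{n→∞} c_n = c > 1, the expected number of isolated vertices in H(n; μ, Θ_n) tends to 0 as n → ∞, i.e., lim_{n→∞} E[I_n] = 0. -/
open MeasureTheory Finset Filter

/-- Edge probability between a class-`i` node and a class-`j` node in the
inhomogeneous random key graph. -/
noncomputable def pEdge (P : ℕ) {r : ℕ} (K : Fin r → ℕ) (i j : Fin r) : ℝ :=
  if K i + K j ≤ P then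
    1 - ((P - K i).choose (K j) : ℝ) / (P.choose (K j) : ℝ)
  else 1

/-- Mean edge probability `Λ_i` of a class-`i` node in the intersection model. -/
noncomputable def LamE {r : ℕ} (μ : Fin r → ℝ) (α : Fin r → Fin r → ℝ)
    (P : ℕ) (K : Fin r → ℕ) (i : Fin r) : ℝ :=
  ∑ j, μ j * (α i j * pEdge P K i j)

/-- Minimum mean edge probability `Λ_m`. -/
noncomputable def LamMin {r : ℕ} (μ : Fin r → ℝ) (α : Fin r → Fin r → ℝ)
    (P : ℕ) (K : Fin r → ℕ) : ℝ :=
  ⨅ i, LamE μ α P K i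

/-- The random graph `H(n; μ, Θ)`: random types (distribution `μ`), random key
rings (uniform `K`-subsets of a `P`-pool, given types), and random channel
indicators (Bernoulli `α_{ij}`, given types), all with the joint distribution
described by the field `joint`. -/
structure HetModel (r n P : ℕ) (K : Fin r → ℕ) (μ : Fin r → ℝ)
    (α : Fin r → Fin r → ℝ) (Ω : Type) [MeasurableSpace Ω]
    (Pr : Measure Ω) : Type where
  typ : Ω → Fin n → Fin r
  keyring : Ω → Fin n → Finset (Fin P)
  chan : Ω → Fin n → Fin n → Bool
  joint : ∀ (t₀ : Fin n → Fin r) (σ₀ : Fin n → Finset (Fin P))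
      (b₀ : Fin n → Fin n → Bool),
      Pr {ω | typ ω = t₀ ∧ keyring ω = σ₀ ∧
              ∀ x y : Fin n, x < y → chan ω x y = b₀ x y}
        = ENNReal.ofReal
            ((∏ x, μ (t₀ x)) *
             (∏ x, if (σ₀ x).card = K (t₀ x)
                   then ((P.choose (K (t₀ x)) : ℝ))⁻¹ else 0) *
             (∏ x : Fin n, ∏ y ∈ univ.filter (fun y => x < y),
                (if b₀ x y then α (t₀ x) (t₀ y) else 1 - α (t₀ x) (t₀ y))))

variable {r n P : ℕ} {K : Fin r → ℕ} {μ : Fin r → ℝ} {α : Fin r → Fin r → ℝ}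
  {Ω : Type} [MeasurableSpace Ω] {Pr : Measure Ω}

/-- Adjacency in `H(n; μ, Θ)`: distinct vertices sharing a key whose channel is on. -/
def HetModel.Adj (M : HetModel r n P K μ α Ω Pr) (ω : Ω) (x y : Fin n) : Prop :=
  x ≠ y ∧ ((M.keyring ω x) ∩ (M.keyring ω y)).Nonempty ∧
    (if x < y then M.chan ω x y else M.chan ω y x) = true

/-- A vertex is isolated if it is adjacent to no other vertex. -/
def HetModel.Isolated (M : HetModel r n P K μ α Ω Pr) (ω : Ω) (x : Fin n) : Prop :=
  ∀ y : Fin n, ¬ M.Adj ω x y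

/-!
By the first-moment method, `E[I_n] = ∑ₓ P(x isolated)`. The event that `x₀` is isolated is
covered by cylinder sets of the joint law; summing their weights out in turn over the channel
indicators, the key rings and the types (each a product-measure computation centred at `x₀`)
gives `P(x₀ isolated) ≤ ∑ᵢ μᵢ (1 - Λᵢ)^(n-1) ≤ exp (-Λ_m) ^ (n-1)`. Under the scaling,
`n exp (-Λ_m) ^ (n-1) = exp (log n (1 - c_n (1 - 1/n)))`, which tends to `0` because `c > 1`.
-/

theorem sum_pi_prod_mul_prod_erase {ι κ R : Type*} [Fintype ι] [DecidableEq ι] [Fintype κ]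
    [DecidableEq κ] [CommSemiring R] (x₀ : ι) (w : ι → κ → R) (g : ι → κ → κ → R) :
    ∑ f : ι → κ, (∏ x, w x (f x)) * ∏ y ∈ univ.erase x₀, g y (f x₀) (f y) =
      ∑ k, w x₀ k * ∏ y ∈ univ.erase x₀, ∑ k', w y k' * g y k k' := by
  -- `G k` pins the coordinate `x₀` to `k`, turning the right side into a sum of products
  set G : κ → ι → κ → R := fun k x k' =>
    if x = x₀ then (if k' = k then w x k' else 0) else w x k' * g x k k'
  have hpin : ∀ (f : ι → κ) k, ∏ x, G k x (f x) =
      if f x₀ = k then (∏ x, w x (f x)) * ∏ y ∈ univ.erase x₀, g y (f x₀) (f y) else 0 := by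
    intro f k
    rw [← mul_prod_erase univ _ (mem_univ x₀), ← mul_prod_erase univ _ (mem_univ x₀)]
    split_ifs with hk
    · subst hk
      simp only [G, if_pos rfl]
      rw [mul_assoc, ← prod_mul_distrib]
      exact congrArg _ (prod_congr rfl fun y hy => by simp [ne_of_mem_erase hy])
    · simp [G, hk]
  have hrow : ∀ k, ∑ k', G k x₀ k' = w x₀ k := by simp [G]
  have hcol : ∀ k, ∀ y ∈ univ.erase x₀, ∑ k', G k y k' = ∑ k', w y k' * g y k k' :=
    fun k y hy => by simp [G, ne_of_mem_erase hy]
  calc _ = ∑ f : ι → κ, ∑ k, ∏ x, G k x (f x) := by simp only [hpin, sum_ite_eq]; simp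
    _ = ∑ k, ∏ x, ∑ k', G k x k' := by rw [sum_comm]; simp only [Fintype.prod_sum]
    _ = _ := by
      refine sum_congr rfl fun k _ => ?_
      rw [← mul_prod_erase univ _ (mem_univ x₀), hrow, prod_congr rfl (hcol k)]

theorem prod_prod_ite_lt_incident {ι M : Type*} [Fintype ι] [LinearOrder ι] [CommMonoid M]
    (x₀ : ι) (g : ι → ι → M) (hg : ∀ x y, g x y = g y x) :
    ∏ x, ∏ y, (if x < y ∧ (x = x₀ ∨ y = x₀) then g x y else 1) = ∏ y ∈ univ.erase x₀, g x₀ y := by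
  have hsplit : ∀ x y, (if x < y ∧ (x = x₀ ∨ y = x₀) then g x y else 1) =
      (if x = x₀ then (if x₀ < y then g x₀ y else 1) else 1) *
        (if y = x₀ then (if x < x₀ then g x₀ x else 1) else 1) := by
    intro x y
    by_cases hx : x = x₀ <;> by_cases hy : y = x₀ <;> simp [hx, hy, hg x₀]
  simp only [hsplit, prod_mul_distrib, prod_ite_irrel, prod_const_one]
  rw [prod_comm (f := fun x y => if y = x₀ then _ else 1)]
  simp only [prod_ite_irrel, prod_const_one, Fintype.prod_ite_eq']
  rw [← prod_mul_distrib, ← filter_ne', prod_filter]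
  refine prod_congr rfl fun y _ => ?_
  rcases lt_trichotomy x₀ y with h | rfl | h
  · simp [h, h.ne', h.not_gt]
  · simp
  · simp [h, h.ne, h.not_gt]

/-- Channel configurations, recorded on the pairs `x < y` only (all other entries `false`), in
which no `adj`-neighbour of `x₀` has an open channel to `x₀`. -/
def isolatingChannels {ι : Type*} [Fintype ι] [LinearOrder ι] (x₀ : ι) (adj : ι → ι → Prop)
    [DecidableRel adj] : Finset (ι → ι → Bool) :=
  Fintype.piFinset fun x => Fintype.piFinset fun y =>
    if x < y ∧ ¬((x = x₀ ∨ y = x₀) ∧ adj x y) then univ else {false}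

theorem sum_isolatingChannels_prod {ι R : Type*} [Fintype ι] [LinearOrder ι] [CommRing R]
    (x₀ : ι) (adj : ι → ι → Prop) [DecidableRel adj] (hadj : ∀ x y, adj x y ↔ adj y x)
    (a : ι → ι → R) (ha : ∀ x y, a x y = a y x) :
    ∑ b ∈ isolatingChannels x₀ adj,
        ∏ x, ∏ y ∈ univ.filter (fun y => x < y), (if b x y then a x y else 1 - a x y) =
      ∏ y ∈ univ.erase x₀, (if adj x₀ y then 1 - a x₀ y else 1) := by
  set A : ι → ι → Finset Bool := fun x y =>
    if x < y ∧ ¬((x = x₀ ∨ y = x₀) ∧ adj x y) then univ else {false}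
  set F : ι → ι → Bool → R := fun x y v => if x < y then (if v then a x y else 1 - a x y) else 1
  set g : ι → ι → R := fun x y => if adj x y then 1 - a x y else 1
  have hentry : ∀ x y, ∑ v ∈ A x y, F x y v = if x < y ∧ (x = x₀ ∨ y = x₀) then g x y else 1 := by
    intro x y
    by_cases hxy : x < y <;> by_cases hinc : x = x₀ ∨ y = x₀ <;> by_cases hadjxy : adj x y <;>
      simp [A, F, g, hxy, hinc, hadjxy]
  calc _ = ∑ b ∈ Fintype.piFinset (fun x => Fintype.piFinset (A x)), ∏ x, ∏ y, F x y (b x y) := by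
        simp only [prod_filter]
        rfl
    _ = ∏ x, ∏ y, ∑ v ∈ A x y, F x y v := by
        simp only [prod_univ_sum]
    _ = _ := by
        simp only [hentry]
        refine prod_prod_ite_lt_incident x₀ g fun x y => ?_
        simp only [g, ha x y, hadj x y]

noncomputable def keyRingWeight (P k : ℕ) (s : Finset (Fin P)) : ℝ :=
  if #s = k then ((P.choose k : ℝ))⁻¹ else 0

theorem keyRingWeight_nonneg (P k : ℕ) (s : Finset (Fin P)) : 0 ≤ keyRingWeight P k s := by
  unfold keyRingWeight
  split_ifs <;> positivity

theorem sum_keyRingWeight {P k : ℕ} (hk : k ≤ P) : ∑ s, keyRingWeight P k s = 1 := by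
  simp only [keyRingWeight]
  rw [sum_ite, sum_const_zero, add_zero, sum_const, ← powerset_univ,
    ← powersetCard_eq_filter, card_powersetCard, card_univ, Fintype.card_fin, nsmul_eq_mul]
  exact mul_inv_cancel₀ (Nat.cast_ne_zero.2 (Nat.choose_pos hk).ne')

theorem sum_keyRingWeight_disjoint (P k : ℕ) (s₀ : Finset (Fin P)) :
    ∑ s, keyRingWeight P k s * (if Disjoint s₀ s then 1 else 0) =
      ((P - #s₀).choose k : ℝ) / (P.choose k : ℝ) := by
  have hfilter : univ.filter (fun s => Disjoint s₀ s ∧ #s = k) = powersetCard k s₀ᶜ := by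
    ext s
    simp [mem_powersetCard, subset_compl_iff_disjoint_left]
  simp only [keyRingWeight, mul_ite, mul_one, mul_zero, ← ite_and]
  rw [sum_ite, sum_const_zero, add_zero, sum_const, hfilter, card_powersetCard, card_compl,
    Fintype.card_fin, nsmul_eq_mul, div_eq_mul_inv]

theorem sum_keyRingWeight_mul_ite_inter {P k : ℕ} (hk : k ≤ P) (s₀ : Finset (Fin P)) (a : ℝ) :
    ∑ s, keyRingWeight P k s * (if (s₀ ∩ s).Nonempty then 1 - a else 1) =
      1 - a * (1 - ((P - #s₀).choose k : ℝ) / (P.choose k : ℝ)) := by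
  have hsplit : ∀ s : Finset (Fin P), (if (s₀ ∩ s).Nonempty then 1 - a else 1) =
      1 - a + a * (if Disjoint s₀ s then 1 else 0) := by
    intro s
    by_cases h : Disjoint s₀ s
    · simp [h, disjoint_iff_inter_eq_empty.1 h]
    · simp [h, not_disjoint_iff_nonempty_inter.1 h]
  simp only [hsplit, mul_add, sum_add_distrib, ← sum_mul, mul_left_comm _ a, ← mul_sum,
    sum_keyRingWeight hk, sum_keyRingWeight_disjoint]
  ring

theorem pEdge_eq {i : Fin r} (hi : K i ≤ P) (j : Fin r) :
    pEdge P K i j = 1 - ((P - K i).choose (K j) : ℝ) / (P.choose (K j) : ℝ) := by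
  unfold pEdge
  split_ifs with h
  · rfl
  · rw [Nat.choose_eq_zero_of_lt (by omega)]
    simp

theorem pEdge_nonneg (P : ℕ) (K : Fin r → ℕ) (i j : Fin r) : 0 ≤ pEdge P K i j := by
  unfold pEdge
  split_ifs
  · refine sub_nonneg.2 (div_le_one_of_le₀ ?_ (Nat.cast_nonneg _))
    exact_mod_cast Nat.choose_le_choose _ (Nat.sub_le P (K i))
  · exact zero_le_one

theorem pEdge_le_one (P : ℕ) (K : Fin r → ℕ) (i j : Fin r) : pEdge P K i j ≤ 1 := by
  unfold pEdge
  split_ifs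
  · exact sub_le_self _ (by positivity)
  · exact le_rfl

theorem LamE_le_one (hμ : ∀ i, 0 ≤ μ i) (hμsum : ∑ i, μ i = 1) (hα₁ : ∀ i j, α i j ≤ 1)
    (i : Fin r) : LamE μ α P K i ≤ 1 :=
  hμsum ▸ sum_le_sum fun j _ => mul_le_of_le_one_right (hμ j)
    (mul_le_one₀ (hα₁ i j) (pEdge_nonneg P K i j) (pEdge_le_one P K i j))

theorem sum_mul_one_sub_LamE_pow_le (hμ : ∀ i, 0 ≤ μ i) (hμsum : ∑ i, μ i = 1)
    (hα₁ : ∀ i j, α i j ≤ 1) (m : ℕ) :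
    ∑ i, μ i * (1 - LamE μ α P K i) ^ m ≤ Real.exp (-LamMin μ α P K) ^ m := by
  calc ∑ i, μ i * (1 - LamE μ α P K i) ^ m ≤ ∑ i, μ i * Real.exp (-LamMin μ α P K) ^ m := by
        refine sum_le_sum fun i _ => mul_le_mul_of_nonneg_left ?_ (hμ i)
        refine pow_le_pow_left₀ (sub_nonneg.2 (LamE_le_one hμ hμsum hα₁ i)) ?_ m
        refine (Real.one_sub_le_exp_neg _).trans (Real.exp_le_exp.2 (neg_le_neg ?_))
        exact ciInf_le (Set.finite_range _).bddBelow i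
    _ = Real.exp (-LamMin μ α P K) ^ m := by rw [← sum_mul, hμsum, one_mul]

/-- The probability that `HetModel.joint` assigns to the configuration `(t, σ, b)`. -/
noncomputable def configWeight (μ : Fin r → ℝ) (α : Fin r → Fin r → ℝ) (K : Fin r → ℕ)
    (t : Fin n → Fin r) (σ : Fin n → Finset (Fin P)) (b : Fin n → Fin n → Bool) : ℝ :=
  (∏ x, μ (t x)) * (∏ x, keyRingWeight P (K (t x)) (σ x)) *
    ∏ x, ∏ y ∈ univ.filter (fun y => x < y), (if b x y then α (t x) (t y) else 1 - α (t x) (t y))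

theorem sum_keyRings_prod_erase (hK : ∀ i, K i ≤ P) (x₀ : Fin n) (t : Fin n → Fin r) :
    ∑ σ : Fin n → Finset (Fin P), (∏ x, keyRingWeight P (K (t x)) (σ x)) *
        ∏ y ∈ univ.erase x₀, (if (σ x₀ ∩ σ y).Nonempty then 1 - α (t x₀) (t y) else 1) =
      ∏ y ∈ univ.erase x₀, (1 - α (t x₀) (t y) * pEdge P K (t x₀) (t y)) := by
  refine (sum_pi_prod_mul_prod_erase x₀ (fun x s => keyRingWeight P (K (t x)) s)
    (fun y s s' => if (s ∩ s').Nonempty then 1 - α (t x₀) (t y) else 1)).trans ?_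
  simp only [sum_keyRingWeight_mul_ite_inter (hK _)]
  calc _ = ∑ s, keyRingWeight P (K (t x₀)) s *
        ∏ y ∈ univ.erase x₀, (1 - α (t x₀) (t y) * pEdge P K (t x₀) (t y)) := by
        refine sum_congr rfl fun s _ => ?_
        by_cases hs : #s = K (t x₀)
        · simp only [hs, pEdge_eq (hK _)]
        · simp [keyRingWeight, hs]
    _ = _ := by rw [← sum_mul, sum_keyRingWeight (hK _), one_mul]

theorem sum_types_prod_erase (hμsum : ∑ i, μ i = 1) (x₀ : Fin n) :
    ∑ t : Fin n → Fin r, (∏ x, μ (t x)) *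
        ∏ y ∈ univ.erase x₀, (1 - α (t x₀) (t y) * pEdge P K (t x₀) (t y)) =
      ∑ i, μ i * (1 - LamE μ α P K i) ^ (n - 1) := by
  have hrow : ∀ i, ∑ j, μ j * (1 - α i j * pEdge P K i j) = 1 - LamE μ α P K i := by
    simp [mul_sub, sum_sub_distrib, hμsum, LamE]
  refine (sum_pi_prod_mul_prod_erase x₀ (fun _ i => μ i)
    (fun _ i j => 1 - α i j * pEdge P K i j)).trans ?_
  simp only [hrow, prod_const, card_erase_of_mem (mem_univ x₀), card_univ, Fintype.card_fin]

theorem sum_configWeight_isolatingChannels (hμsum : ∑ i, μ i = 1)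
    (hα : ∀ i j, α i j = α j i) (hK : ∀ i, K i ≤ P) (x₀ : Fin n) :
    ∑ t, ∑ σ : Fin n → Finset (Fin P),
        ∑ b ∈ isolatingChannels x₀ (fun x y => (σ x ∩ σ y).Nonempty), configWeight μ α K t σ b =
      ∑ i, μ i * (1 - LamE μ α P K i) ^ (n - 1) := by
  have hinter : ∀ (σ : Fin n → Finset (Fin P)) x y,
      (σ x ∩ σ y).Nonempty ↔ (σ y ∩ σ x).Nonempty := fun σ x y => by rw [inter_comm]
  calc _ = ∑ t : Fin n → Fin r, (∏ x, μ (t x)) * ∑ σ : Fin n → Finset (Fin P),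
        (∏ x, keyRingWeight P (K (t x)) (σ x)) *
          ∏ y ∈ univ.erase x₀, (if (σ x₀ ∩ σ y).Nonempty then 1 - α (t x₀) (t y) else 1) := by
        refine sum_congr rfl fun t _ => ?_
        simp only [configWeight, ← mul_sum, mul_assoc,
          sum_isolatingChannels_prod x₀ _ (hinter _) _ fun x y => hα (t x) (t y)]
    _ = _ := by
        simp only [sum_keyRings_prod_erase hK]
        exact sum_types_prod_erase hμsum x₀

theorem configWeight_nonneg (hμ : ∀ i, 0 ≤ μ i) (hα₀ : ∀ i j, 0 ≤ α i j)
    (hα₁ : ∀ i j, α i j ≤ 1) (t : Fin n → Fin r) (σ : Fin n → Finset (Fin P))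
    (b : Fin n → Fin n → Bool) : 0 ≤ configWeight μ α K t σ b := by
  refine mul_nonneg (mul_nonneg (prod_nonneg fun x _ => hμ _)
    (prod_nonneg fun x _ => keyRingWeight_nonneg _ _ _))
    (prod_nonneg fun x _ => prod_nonneg fun y _ => ?_)
  split_ifs
  · exact hα₀ _ _
  · exact sub_nonneg.2 (hα₁ _ _)

namespace HetModel

variable (M : HetModel r n P K μ α Ω Pr)

theorem isolated_subset_iUnion (x₀ : Fin n) :
    {ω | M.Isolated ω x₀} ⊆ ⋃ t, ⋃ σ : Fin n → Finset (Fin P),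
      ⋃ b ∈ isolatingChannels x₀ (fun x y => (σ x ∩ σ y).Nonempty),
        {ω | M.typ ω = t ∧ M.keyring ω = σ ∧ ∀ x y, x < y → M.chan ω x y = b x y} := by
  intro ω hω
  set b : Fin n → Fin n → Bool := fun x y => if x < y then M.chan ω x y else false
  have hb : b ∈ isolatingChannels x₀ (fun x y => (M.keyring ω x ∩ M.keyring ω y).Nonempty) := by
    simp only [isolatingChannels, Fintype.mem_piFinset]
    intro x y
    split_ifs with hfree
    · exact mem_univ _
    · rw [mem_singleton]
      by_cases hxy : x < y
      · have hblocked : (x = x₀ ∨ y = x₀) ∧ (M.keyring ω x ∩ M.keyring ω y).Nonempty := by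
          tauto
        simp only [b, if_pos hxy, Bool.eq_false_iff]
        intro hchan
        rcases hblocked with ⟨rfl | rfl, hkey⟩
        · exact hω y ⟨hxy.ne, hkey, by simpa [hxy] using hchan⟩
        · exact hω x ⟨hxy.ne', by rwa [inter_comm], by simpa [hxy.not_gt] using hchan⟩
      · simp [b, hxy]
  simp only [Set.mem_iUnion]
  exact ⟨_, _, b, hb, rfl, rfl, fun x y hxy => (if_pos hxy).symm⟩

theorem measure_isolated_le (hμ : ∀ i, 0 ≤ μ i) (hμsum : ∑ i, μ i = 1)
    (hα₀ : ∀ i j, 0 ≤ α i j) (hα₁ : ∀ i j, α i j ≤ 1) (hα : ∀ i j, α i j = α j i)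
    (hK : ∀ i, K i ≤ P) (x₀ : Fin n) :
    Pr {ω | M.Isolated ω x₀} ≤ ENNReal.ofReal (∑ i, μ i * (1 - LamE μ α P K i) ^ (n - 1)) := by
  calc Pr {ω | M.Isolated ω x₀}
      ≤ ∑ t, ∑ σ : Fin n → Finset (Fin P),
          ∑ b ∈ isolatingChannels x₀ (fun x y => (σ x ∩ σ y).Nonempty),
            ENNReal.ofReal (configWeight μ α K t σ b) := by
        refine (measure_mono (M.isolated_subset_iUnion x₀)).trans <|
          (measure_iUnion_fintype_le _ _).trans <| sum_le_sum fun t _ =>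
          (measure_iUnion_fintype_le _ _).trans <| sum_le_sum fun σ _ =>
          (measure_biUnion_finset_le _ _).trans <| sum_le_sum fun b _ => ?_
        exact (M.joint t σ b).le
    _ = ENNReal.ofReal (∑ t, ∑ σ : Fin n → Finset (Fin P),
          ∑ b ∈ isolatingChannels x₀ (fun x y => (σ x ∩ σ y).Nonempty),
            configWeight μ α K t σ b) := by
        have hw := configWeight_nonneg (n := n) (P := P) (K := K) hμ hα₀ hα₁
        simp only [ENNReal.ofReal_sum_of_nonneg fun _ _ => sum_nonneg fun _ _ =>
          sum_nonneg fun _ _ => hw _ _ _, ENNReal.ofReal_sum_of_nonneg fun _ _ =>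
          sum_nonneg fun _ _ => hw _ _ _, ENNReal.ofReal_sum_of_nonneg fun _ _ => hw _ _ _]
    _ = _ := by rw [sum_configWeight_isolatingChannels hμsum hα hK]

end HetModel

theorem lintegral_sum_indicator_one_le {ι : Type*} (s : Finset ι) (S : ι → Set Ω) :
    ∫⁻ ω, ∑ x ∈ s, (S x).indicator 1 ω ∂Pr ≤ ∑ x ∈ s, Pr (S x) := by
  calc ∫⁻ ω, ∑ x ∈ s, (S x).indicator 1 ω ∂Pr
      ≤ ∫⁻ ω, ∑ x ∈ s, (toMeasurable Pr (S x)).indicator 1 ω ∂Pr :=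
        lintegral_mono fun ω => sum_le_sum fun x _ =>
          Set.indicator_le_indicator_of_subset (subset_toMeasurable Pr _) (fun _ => zero_le) ω
    _ = ∑ x ∈ s, Pr (S x) := by
        rw [lintegral_finsetSum _ fun x _ =>
          measurable_one.indicator (measurableSet_toMeasurable Pr (S x))]
        exact sum_congr rfl fun x _ => by
          rw [lintegral_indicator_one (measurableSet_toMeasurable Pr _), measure_toMeasurable]

theorem HetModel.lintegral_sum_isolated_le (M : HetModel r n P K μ α Ω Pr)
    (hμ : ∀ i, 0 ≤ μ i) (hμsum : ∑ i, μ i = 1) (hα₀ : ∀ i j, 0 ≤ α i j)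
    (hα₁ : ∀ i j, α i j ≤ 1) (hα : ∀ i j, α i j = α j i) (hK : ∀ i, K i ≤ P) :
    ∫⁻ ω, (∑ x : Fin n, {ω' | M.Isolated ω' x}.indicator 1 ω) ∂Pr ≤
      ENNReal.ofReal (n * Real.exp (-LamMin μ α P K) ^ (n - 1)) := by
  calc _ ≤ ∑ x : Fin n, Pr {ω | M.Isolated ω x} := lintegral_sum_indicator_one_le _ _
    _ ≤ ∑ _x : Fin n, ENNReal.ofReal (Real.exp (-LamMin μ α P K) ^ (n - 1)) :=
        sum_le_sum fun x _ => (M.measure_isolated_le hμ hμsum hα₀ hα₁ hα hK x).trans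
          (ENNReal.ofReal_le_ofReal (sum_mul_one_sub_LamE_pow_le hμ hμsum hα₁ _))
    _ = _ := by
        rw [sum_const, card_univ, Fintype.card_fin, nsmul_eq_mul,
          ENNReal.ofReal_mul (Nat.cast_nonneg n), ENNReal.ofReal_natCast]

theorem tendsto_mul_exp_neg_pow_of_scaling {Λ cn : ℕ → ℝ} {c : ℝ} (hc : 1 < c)
    (hcn : Tendsto cn atTop (nhds c)) (hΛ : ∀ n, 2 ≤ n → Λ n = cn n * Real.log n / n) :
    Tendsto (fun n : ℕ => n * Real.exp (-Λ n) ^ (n - 1)) atTop (nhds 0) := by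
  have hrate : Tendsto (fun n : ℕ => 1 - cn n * (1 - 1 / (n : ℝ))) atTop (nhds (1 - c)) := by
    simpa using (tendsto_const_nhds (x := (1 : ℝ))).sub (hcn.mul
      ((tendsto_const_nhds (x := (1 : ℝ))).sub tendsto_one_div_atTop_nhds_zero_nat))
  have hexponent : Tendsto (fun n : ℕ => Real.log n * (1 - cn n * (1 - 1 / (n : ℝ))))
      atTop atBot :=
    (Real.tendsto_log_atTop.comp tendsto_natCast_atTop_atTop).atTop_mul_neg (by linarith) hrate
  refine (Real.tendsto_exp_atBot.comp hexponent).congr' ?_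
  filter_upwards [eventually_ge_atTop 2] with n hn
  have hn0 : (0 : ℝ) < n := by positivity
  rw [Function.comp_apply, hΛ n hn, ← Real.exp_nat_mul, Nat.cast_pred (by omega),
    ← Real.exp_log hn0, ← Real.exp_add, Real.exp_log hn0]
  congr 1
  field_simp
  ring

theorem expected_isolated_tendsto_zero_general
    (hμpos : ∀ i, 0 < μ i) (hμsum : ∑ i, μ i = 1)
    (Pn : ℕ → ℕ) (Kn : ℕ → Fin r → ℕ)
    (hKP : ∀ n i, 2 * Kn n i ≤ Pn n)
    (αn : ℕ → Fin r → Fin r → ℝ)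
    (hα0 : ∀ n i j, 0 < αn n i j) (hα1 : ∀ n i j, αn n i j < 1)
    (hαsymm : ∀ n i j, αn n i j = αn n j i)
    (c : ℝ) (hc : 1 < c) (cn : ℕ → ℝ)
    (hcn : Tendsto cn atTop (nhds c))
    (hscal : ∀ n, 2 ≤ n →
      LamMin μ (αn n) (Pn n) (Kn n) = cn n * Real.log n / n)
    (Ω : ℕ → Type) [mΩ : ∀ n, MeasurableSpace (Ω n)]
    (Pr : ∀ n, Measure (Ω n))
    (M : ∀ n, HetModel r n (Pn n) (Kn n) μ (αn n) (Ω n) (Pr n)) :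
    Tendsto
      (fun n => ∫⁻ ω, (∑ x : Fin n, {ω' | (M n).Isolated ω' x}.indicator 1 ω) ∂(Pr n))
      atTop (nhds (0 : ENNReal)) := by
  have hbound n := (M n).lintegral_sum_isolated_le (fun i => (hμpos i).le) hμsum
    (fun i j => (hα0 n i j).le) (fun i j => (hα1 n i j).le) (hαsymm n)
    (fun i => by have := hKP n i; omega)
  have hlimit : Tendsto (fun n : ℕ => ENNReal.ofReal
      (n * Real.exp (-LamMin μ (αn n) (Pn n) (Kn n)) ^ (n - 1))) atTop (nhds 0) := by
    simpa using ENNReal.tendsto_ofReal (tendsto_mul_exp_neg_pow_of_scaling hc hcn hscal)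
  exact tendsto_of_tendsto_of_tendsto_of_le_of_le tendsto_const_nhds hlimit
    (fun _ => zero_le) hbound

/-- under any scaling with `Λ_m(n) = c_n log n / n` and
`c_n → c > 1`, the expected number of isolated vertices of `H(n; μ, Θ_n)`
tends to `0`. -/
theorem expected_isolated_tendsto_zero
    (hr : 0 < r)
    (hμpos : ∀ i, 0 < μ i) (hμsum : ∑ i, μ i = 1)
    (Pn : ℕ → ℕ) (Kn : ℕ → Fin r → ℕ)
    (hKpos : ∀ n i, 1 ≤ Kn n i)
    (hKmono : ∀ n, Monotone (Kn n))
    (hKP : ∀ n i, 2 * Kn n i ≤ Pn n)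
    (αn : ℕ → Fin r → Fin r → ℝ)
    (hα0 : ∀ n i j, 0 < αn n i j) (hα1 : ∀ n i j, αn n i j < 1)
    (hαsymm : ∀ n i j, αn n i j = αn n j i)
    (c : ℝ) (hc : 1 < c) (cn : ℕ → ℝ)
    (hcn : Tendsto cn atTop (nhds c))
    (hscal : ∀ n, 2 ≤ n →
      LamMin μ (αn n) (Pn n) (Kn n) = cn n * Real.log n / n)
    (Ω : ℕ → Type) [mΩ : ∀ n, MeasurableSpace (Ω n)]
    (Pr : ∀ n, Measure (Ω n)) (hPr : ∀ n, IsProbabilityMeasure (Pr n))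
    (M : ∀ n, HetModel r n (Pn n) (Kn n) μ (αn n) (Ω n) (Pr n)) :
    Tendsto
      (fun n => ∫⁻ ω, (∑ x : Fin n, {ω' | (M n).Isolated ω' x}.indicator 1 ω) ∂(Pr n))
      atTop (nhds (0 : ENNReal)) :=
  expected_isolated_tendsto_zero_general hμpos hμsum Pn Kn hKP αn hα0 hα1 hαsymm c hc cn hcn hscal Ω
    (mΩ := mΩ) Pr M
end

section
/- Consider a scaling satisfying the scaling condition Λ_m(n) = c_n (log n)/n with lim_{n→∞} c_n = c, where 0 < c < 1. Let x_{n,1} be the indicator random variable of the event that in H(n; μ, Θ_n) vertex v_1 has type m(n) and is isolated. Then lim_{n→∞} n·E[x_{n,1}] = ∞. Equivalently, lim_{n→∞} n·μ_{m(n)}·(1 − Λ_m(n))^{n−1} = ∞. -/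
/-!
Let `z` be the least vertex. Given its type `m` and its key ring, every other vertex is,
independently, non-adjacent to `z` with probability `∑ⱼ μⱼ (1 - αₘⱼ pₘⱼ) = 1 - Λₘ`, so summing the
joint law over the atoms gives `P[t_z = m, z isolated] = μₘ (1 - Λₘ)^(n-1)`. The model prescribes
the measures of the atoms but not their measurability, so this is obtained as a lower bound, by
covering the complementary event with atoms and using subadditivity.

Since `log (1 - x) ≥ -x / (1 - x)`, the scaling `Λₘ = cₙ log n / n` gives
`n (1 - Λₘ)^(n-1) ≥ n^(1-b)` eventually, for any `b` with `max c 0 < b < 1`.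
-/

open MeasureTheory Finset Filter

variable {r n P : ℕ} {K : Fin r → ℕ} {μ : Fin r → ℝ} {α : Fin r → Fin r → ℝ}
  {Ω : Type} [MeasurableSpace Ω] {Pr : Measure Ω}

open Topology

theorem exp_neg_mul_div_one_sub_le_one_sub_pow {x : ℝ} (hx : x < 1) (k : ℕ) :
    Real.exp (-(k * (x / (1 - x)))) ≤ (1 - x) ^ k := by
  have hpos : 0 < 1 - x := by linarith
  have hlog : -(x / (1 - x)) ≤ Real.log (1 - x) := by
    have := Real.one_sub_inv_le_log_of_pos hpos
    rwa [show 1 - (1 - x)⁻¹ = -(x / (1 - x)) by field_simp; ring] at this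
  rw [← Real.rpow_natCast, Real.rpow_def_of_pos hpos, mul_comm (Real.log _)]
  exact Real.exp_le_exp.2 (by rw [← mul_neg]; exact mul_le_mul_of_nonneg_left hlog k.cast_nonneg)

theorem exp_mul_log_le_mul_one_sub_pow {x b : ℝ} {k : ℕ} (hk : 1 ≤ k) (hx : x < 1)
    (hxb : (k - 1 : ℕ) * (x / (1 - x)) ≤ b * Real.log k) :
    Real.exp ((1 - b) * Real.log k) ≤ k * (1 - x) ^ (k - 1) := by
  have hk0 : (0 : ℝ) < k := by exact_mod_cast hk
  calc Real.exp ((1 - b) * Real.log k) = k * Real.exp (-(b * Real.log k)) := by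
        rw [sub_mul, one_mul, sub_eq_add_neg, Real.exp_add, Real.exp_log hk0]
    _ ≤ k * Real.exp (-((k - 1 : ℕ) * (x / (1 - x)))) := by gcongr
    _ ≤ k * (1 - x) ^ (k - 1) := by gcongr; exact exp_neg_mul_div_one_sub_le_one_sub_pow hx _

theorem tendsto_natCast_mul_one_sub_pow_atTop {x a : ℕ → ℝ} {c : ℝ} (hc : c < 1)
    (ha : Tendsto a atTop (𝓝 c)) (hx : ∀ᶠ k in atTop, x k = a k * Real.log k / k) :
    Tendsto (fun k : ℕ => k * (1 - x k) ^ (k - 1)) atTop atTop := by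
  obtain ⟨b, hcb, hb1⟩ := exists_between (max_lt hc zero_lt_one)
  have hx0 : Tendsto x atTop (𝓝 0) := by
    have hlog : Tendsto (fun k : ℕ => Real.log k / k) atTop (𝓝 0) :=
      Real.isLittleO_log_id_atTop.tendsto_div_nhds_zero.comp tendsto_natCast_atTop_atTop
    have := (ha.mul hlog).congr' (hx.mono fun k hk => (hk.trans (mul_div_assoc _ _ _)).symm)
    rwa [mul_zero] at this
  have hq : ∀ᶠ k in atTop, a k / (1 - x k) < b := by
    have := ha.div (hx0.const_sub 1) (by norm_num)
    simp only [sub_zero, div_one] at this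
    exact this.eventually_lt_const ((le_max_left _ _).trans_lt hcb)
  have hgrowth : Tendsto (fun k : ℕ => Real.exp ((1 - b) * Real.log k)) atTop atTop :=
    Real.tendsto_exp_atTop.comp <| (Real.tendsto_log_atTop.comp
      tendsto_natCast_atTop_atTop).const_mul_atTop (by linarith)
  refine tendsto_atTop_mono' atTop ?_ hgrowth
  filter_upwards [hx, hq, hx0.eventually_lt_const zero_lt_one, eventually_ge_atTop 1]
    with k hxk hqk hx1 hk
  refine exp_mul_log_le_mul_one_sub_pow hk hx1 ?_
  have hk0 : (0 : ℝ) < k := by exact_mod_cast hk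
  have hlog : 0 ≤ Real.log k := Real.log_nonneg (by exact_mod_cast hk)
  have hfrac : 0 ≤ ((k - 1 : ℕ) : ℝ) / k ∧ ((k - 1 : ℕ) : ℝ) / k ≤ 1 :=
    ⟨by positivity, div_le_one_of_le₀ (by exact_mod_cast k.sub_le 1) hk0.le⟩
  have hb0 : 0 ≤ b := (le_max_right _ _).trans hcb.le
  calc ((k - 1 : ℕ) : ℝ) * (x k / (1 - x k))
      = (((k - 1 : ℕ) : ℝ) / k * (a k / (1 - x k))) * Real.log k := by
        rw [hxk]; field_simp
    _ ≤ b * Real.log k := by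
        gcongr
        nlinarith [mul_nonneg hfrac.1 (sub_nonneg.2 hqk.le), mul_nonneg (sub_nonneg.2 hfrac.2) hb0]

theorem Finset.sum_mul_prod_erase_apply {R ι κ : Type*} [CommSemiring R] [Fintype ι]
    [DecidableEq ι] [Fintype κ] [DecidableEq κ] (z : ι) (g : κ → R) (f : κ → ι → κ → R) :
    ∑ σ : ι → κ, g (σ z) * ∏ x ∈ univ.erase z, f (σ z) x (σ x)
      = ∑ s, g s * ∏ x ∈ univ.erase z, ∑ k, f s x k := by
  -- pin down `σ z = s` by a factor at `z`, after which the sum over `σ` factorizes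
  have hF : ∀ (s : κ) (σ : ι → κ), (if σ z = s then g s * ∏ x ∈ univ.erase z, f s x (σ x) else 0)
      = ∏ x, if x = z then (if σ x = s then g s else 0) else f s x (σ x) := by
    intro s σ
    rw [← mul_prod_erase univ _ (mem_univ z),
      prod_congr rfl fun x hx => if_neg (ne_of_mem_erase hx), if_pos rfl, ite_mul, zero_mul]
  calc ∑ σ : ι → κ, g (σ z) * ∏ x ∈ univ.erase z, f (σ z) x (σ x)
      = ∑ s, ∑ σ : ι → κ, ∏ x, if x = z then (if σ x = s then g s else 0) else f s x (σ x) := by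
        rw [sum_comm]
        refine sum_congr rfl fun σ _ => ?_
        simp_rw [← hF, sum_ite_eq, mem_univ, if_true]
    _ = ∑ s, g s * ∏ x ∈ univ.erase z, ∑ k, f s x k := by
        refine sum_congr rfl fun s _ => ?_
        rw [← Fintype.prod_sum fun x k => if x = z then (if k = s then g s else 0) else f s x k,
          ← mul_prod_erase univ _ (mem_univ z)]
        congr 1
        · simp
        · exact prod_congr rfl fun x hx => by simp [ne_of_mem_erase hx]

abbrev LtPairs (n : ℕ) : Type := {p : Fin n × Fin n // p.1 < p.2}

theorem Fin.prod_prod_filter_lt {M : Type*} [CommMonoid M] (f : Fin n → Fin n → M) :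
    ∏ x, ∏ y ∈ univ.filter (fun y => x < y), f x y
      = ∏ p : LtPairs n, f p.1.1 p.1.2 := by
  rw [← prod_subtype (univ.filter fun p : Fin n × Fin n => p.1 < p.2) (by simp)
    (fun p => f p.1 p.2), prod_filter, Fintype.prod_prod_type]
  simp_rw [prod_filter]

/-- Channel states are recorded on the pairs `x < y` only: those are the entries that
`HetModel.joint` constrains. -/
def extendPairs (g : LtPairs n → Bool) (x y : Fin n) : Bool :=
  if h : x < y then g ⟨(x, y), h⟩ else false

theorem sum_prod_extendPairs {R : Type*} [CommSemiring R] (F : Fin n → Fin n → Bool → R) :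
    ∑ g : LtPairs n → Bool, ∏ x, ∏ y ∈ univ.filter (fun y => x < y), F x y (extendPairs g x y)
      = ∏ x, ∏ y ∈ univ.filter (fun y => x < y), ∑ v, F x y v := by
  simp_rw [Fin.prod_prod_filter_lt]
  rw [Fintype.prod_sum]
  refine sum_congr rfl fun g _ => prod_congr rfl fun p _ => ?_
  rw [extendPairs, dif_pos p.2]

noncomputable def keyRingProb (P k : ℕ) (s : Finset (Fin P)) : ℝ :=
  if s.card = k then ((P.choose k : ℝ))⁻¹ else 0

theorem keyRingProb_nonneg (P k : ℕ) (s : Finset (Fin P)) : 0 ≤ keyRingProb P k s := by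
  unfold keyRingProb; split_ifs <;> positivity

theorem sum_keyRingProb {P k : ℕ} (hk : k ≤ P) : ∑ s, keyRingProb P k s = 1 := by
  have hC : (P.choose k : ℝ) ≠ 0 := by exact_mod_cast (Nat.choose_pos hk).ne'
  simp [keyRingProb, ← sum_filter, hC]

theorem sum_keyRingProb_of_inter_nonempty {P k : ℕ} (s₀ : Finset (Fin P)) (h : s₀.card + k ≤ P) :
    ∑ s, (if (s₀ ∩ s).Nonempty then keyRingProb P k s else 0)
      = 1 - ((P - s₀.card).choose k : ℝ) / P.choose k := by
  have hdisjoint : univ.filter (fun s : Finset (Fin P) => ¬(s₀ ∩ s).Nonempty ∧ s.card = k)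
      = powersetCard k s₀ᶜ := by
    ext s
    simp [mem_powersetCard, subset_compl_iff_disjoint_left, disjoint_iff_inter_eq_empty, and_comm]
  have hsplit := sum_filter_add_sum_filter_not univ (fun s => (s₀ ∩ s).Nonempty)
    (keyRingProb P k)
  rw [← sum_filter, eq_sub_iff_add_eq, ← sum_keyRingProb (P := P) (k := k) (by omega), ← hsplit]
  congr 1
  simp only [keyRingProb, sum_ite, sum_const_zero, add_zero, filter_filter, hdisjoint, sum_const,
    card_powersetCard, card_compl, Fintype.card_fin, nsmul_eq_mul, div_eq_mul_inv]

theorem sum_keyRingProb_mul_ite_inter_nonempty {i j : Fin r}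
    (hij : K i + K j ≤ P) {s₀ : Finset (Fin P)} (hs₀ : s₀.card = K i) (a : ℝ) :
    ∑ s, keyRingProb P (K j) s * (if (s₀ ∩ s).Nonempty then 1 - a else 1)
      = 1 - a * pEdge P K i j := by
  have hsplit : ∀ s, keyRingProb P (K j) s * (if (s₀ ∩ s).Nonempty then 1 - a else 1)
      = keyRingProb P (K j) s - a * (if (s₀ ∩ s).Nonempty then keyRingProb P (K j) s else 0) := by
    intro s; split_ifs <;> ring
  rw [sum_congr rfl fun s _ => hsplit s, sum_sub_distrib, ← mul_sum,
    sum_keyRingProb (by omega), sum_keyRingProb_of_inter_nonempty s₀ (by omega), pEdge,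
    if_pos hij, hs₀]

noncomputable def channelProb (a : ℝ) (v : Bool) : ℝ :=
  if v then a else 1 - a

/-- The right-hand side of `HetModel.joint`. -/
noncomputable def atomWeight (μ : Fin r → ℝ) (α : Fin r → Fin r → ℝ) (P : ℕ) (K : Fin r → ℕ)
    (t : Fin n → Fin r) (σ : Fin n → Finset (Fin P)) (b : Fin n → Fin n → Bool) : ℝ :=
  (∏ x, μ (t x)) * (∏ x, keyRingProb P (K (t x)) (σ x)) *
    ∏ x, ∏ y ∈ univ.filter (fun y => x < y), channelProb (α (t x) (t y)) (b x y)

def IsolatedIn (z : Fin n) (σ : Fin n → Finset (Fin P)) (b : Fin n → Fin n → Bool) : Prop :=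
  ∀ y, z < y → ¬((σ z ∩ σ y).Nonempty ∧ b z y = true)

theorem sum_prod_channelProb_isolatedIn {z : Fin n} (hz : IsBot z) (α : Fin r → Fin r → ℝ)
    (t : Fin n → Fin r) (σ : Fin n → Finset (Fin P)) :
    ∑ g : LtPairs n → Bool, ∏ x, ∏ y ∈ univ.filter (fun y => x < y),
        channelProb (α (t x) (t y)) (extendPairs g x y) *
          (if x = z ∧ (σ x ∩ σ y).Nonempty ∧ extendPairs g x y = true then 0 else 1)
      = ∏ y ∈ univ.erase z, (if (σ z ∩ σ y).Nonempty then 1 - α (t z) (t y) else 1) := by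
  have hpair : ∀ x y, ∑ v, channelProb (α (t x) (t y)) v *
        (if x = z ∧ (σ x ∩ σ y).Nonempty ∧ v = true then 0 else 1)
      = if x = z ∧ (σ x ∩ σ y).Nonempty then 1 - α (t x) (t y) else 1 := by
    intro x y
    by_cases h : x = z ∧ (σ x ∩ σ y).Nonempty
    · obtain ⟨rfl, hN⟩ := h
      simp [hN, channelProb]
    · simp [h, channelProb]
  have hfilter : univ.filter (fun y => z < y) = univ.erase z := by
    ext y; simp [lt_iff_le_and_ne, hz y, eq_comm]
  rw [sum_prod_extendPairs fun x y v => channelProb (α (t x) (t y)) v *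
    (if x = z ∧ (σ x ∩ σ y).Nonempty ∧ v = true then 0 else 1)]
  simp_rw [hpair]
  rw [prod_eq_single z (fun x _ hx => prod_eq_one fun y _ => by simp [hx]) (by simp), hfilter]
  simp

theorem sum_prod_keyRingProb_isolatedIn (hK : ∀ i j, K i + K j ≤ P) (α : Fin r → Fin r → ℝ)
    (t : Fin n → Fin r) (z : Fin n) :
    ∑ σ : Fin n → Finset (Fin P), (∏ x, keyRingProb P (K (t x)) (σ x)) *
        ∏ y ∈ univ.erase z, (if (σ z ∩ σ y).Nonempty then 1 - α (t z) (t y) else 1)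
      = ∏ y ∈ univ.erase z, (1 - α (t z) (t y) * pEdge P K (t z) (t y)) := by
  have hsplit : ∀ σ : Fin n → Finset (Fin P), (∏ x, keyRingProb P (K (t x)) (σ x)) *
        ∏ y ∈ univ.erase z, (if (σ z ∩ σ y).Nonempty then 1 - α (t z) (t y) else 1)
      = keyRingProb P (K (t z)) (σ z) * ∏ y ∈ univ.erase z, (keyRingProb P (K (t y)) (σ y) *
          if (σ z ∩ σ y).Nonempty then 1 - α (t z) (t y) else 1) := by
    intro σ
    rw [← mul_prod_erase univ _ (mem_univ z), prod_mul_distrib, mul_assoc]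
  have hring : ∀ s₀, keyRingProb P (K (t z)) s₀ * ∏ y ∈ univ.erase z,
        ∑ s, keyRingProb P (K (t y)) s * (if (s₀ ∩ s).Nonempty then 1 - α (t z) (t y) else 1)
      = keyRingProb P (K (t z)) s₀ *
          ∏ y ∈ univ.erase z, (1 - α (t z) (t y) * pEdge P K (t z) (t y)) := by
    intro s₀
    by_cases hs₀ : s₀.card = K (t z)
    · simp_rw [sum_keyRingProb_mul_ite_inter_nonempty (hK _ _) hs₀]
    · simp [keyRingProb, hs₀]
  simp_rw [hsplit]
  rw [sum_mul_prod_erase_apply z (keyRingProb P (K (t z))) fun s₀ y s =>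
      keyRingProb P (K (t y)) s * if (s₀ ∩ s).Nonempty then 1 - α (t z) (t y) else 1]
  simp_rw [hring]
  rw [← sum_mul, sum_keyRingProb (by linarith [hK (t z) (t z)]), one_mul]

theorem sum_prod_mu_isolatedIn (hμsum : ∑ i, μ i = 1) (α : Fin r → Fin r → ℝ) (P : ℕ)
    (K : Fin r → ℕ) (m : Fin r) (z : Fin n) :
    ∑ t : Fin n → Fin r, (if t z = m then ∏ x, μ (t x) else 0) *
        ∏ y ∈ univ.erase z, (1 - α (t z) (t y) * pEdge P K (t z) (t y))
      = μ m * (1 - LamE μ α P K m) ^ (n - 1) := by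
  have hsplit : ∀ t : Fin n → Fin r, (if t z = m then ∏ x, μ (t x) else 0) *
        ∏ y ∈ univ.erase z, (1 - α (t z) (t y) * pEdge P K (t z) (t y))
      = (if t z = m then μ (t z) else 0) *
          ∏ y ∈ univ.erase z, (μ (t y) * (1 - α (t z) (t y) * pEdge P K (t z) (t y))) := by
    intro t
    rw [prod_mul_distrib, ← mul_prod_erase univ _ (mem_univ z)]
    split_ifs <;> ring
  have hLamE : ∑ j, μ j * (1 - α m j * pEdge P K m j) = 1 - LamE μ α P K m := by
    simp only [LamE, mul_sub, mul_one, sum_sub_distrib, hμsum]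
  simp_rw [hsplit]
  rw [sum_mul_prod_erase_apply z (fun i => if i = m then μ i else 0) fun i _ j =>
      μ j * (1 - α i j * pEdge P K i j)]
  simp [hLamE, prod_const, card_erase_of_mem]

instance (z : Fin n) (σ : Fin n → Finset (Fin P)) (b : Fin n → Fin n → Bool) :
    Decidable (IsolatedIn z σ b) := by
  unfold IsolatedIn; infer_instance

theorem prod_ite_eq_ite_isolatedIn {z : Fin n} (σ : Fin n → Finset (Fin P))
    (b : Fin n → Fin n → Bool) :
    ∏ x, ∏ y ∈ univ.filter (fun y => x < y),
        (if x = z ∧ (σ x ∩ σ y).Nonempty ∧ b x y = true then (0 : ℝ) else 1)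
      = if IsolatedIn z σ b then 1 else 0 := by
  rw [prod_eq_single z (fun x _ hx => prod_eq_one fun y _ => by simp [hx]) (by simp)]
  simp only [true_and]
  rw [prod_congr rfl fun y _ => (ite_not _ _ _).symm, prod_boole]
  simp [IsolatedIn]

theorem sum_atomWeight_isolatedIn (hμsum : ∑ i, μ i = 1) (hK : ∀ i j, K i + K j ≤ P)
    {z : Fin n} (hz : IsBot z) (m : Fin r) :
    ∑ t : Fin n → Fin r, ∑ σ : Fin n → Finset (Fin P), ∑ g : LtPairs n → Bool,
        (if t z = m ∧ IsolatedIn z σ (extendPairs g) then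
          atomWeight μ α P K t σ (extendPairs g) else 0)
      = μ m * (1 - LamE μ α P K m) ^ (n - 1) := by
  have hfactor : ∀ t σ (b : Fin n → Fin n → Bool),
      (if t z = m ∧ IsolatedIn z σ b then atomWeight μ α P K t σ b else 0)
        = (if t z = m then ∏ x, μ (t x) else 0) * ((∏ x, keyRingProb P (K (t x)) (σ x)) *
          ∏ x, ∏ y ∈ univ.filter (fun y => x < y), channelProb (α (t x) (t y)) (b x y) *
            (if x = z ∧ (σ x ∩ σ y).Nonempty ∧ b x y = true then 0 else 1)) := by
    intro t σ b
    simp_rw [prod_mul_distrib, prod_ite_eq_ite_isolatedIn, atomWeight]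
    split_ifs <;> simp_all
    ring
  simp_rw [hfactor, ← mul_sum, sum_prod_channelProb_isolatedIn hz,
    sum_prod_keyRingProb_isolatedIn hK, sum_prod_mu_isolatedIn hμsum]

theorem sum_atomWeight (hμsum : ∑ i, μ i = 1) (hK : ∀ i, K i ≤ P) :
    ∑ t : Fin n → Fin r, ∑ σ : Fin n → Finset (Fin P), ∑ g : LtPairs n → Bool,
        atomWeight μ α P K t σ (extendPairs g) = 1 := by
  have hchannels : ∀ t : Fin n → Fin r, ∑ g : LtPairs n → Bool,
      ∏ x, ∏ y ∈ univ.filter (fun y => x < y), channelProb (α (t x) (t y)) (extendPairs g x y)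
        = 1 := fun t => by
    rw [sum_prod_extendPairs fun x y v => channelProb (α (t x) (t y)) v]
    simp [channelProb]
  have hkeys : ∀ t : Fin n → Fin r,
      ∑ σ : Fin n → Finset (Fin P), ∏ x, keyRingProb P (K (t x)) (σ x) = 1 := fun t => by
    rw [← Fintype.prod_sum fun x s => keyRingProb P (K (t x)) s]
    simp [sum_keyRingProb (hK _)]
  have htypes : ∑ t : Fin n → Fin r, ∏ x, μ (t x) = 1 := by
    rw [← Fintype.prod_sum fun _ i => μ i]
    simp [hμsum]
  simp_rw [atomWeight, ← mul_sum, hchannels, mul_one, ← mul_sum, hkeys, mul_one, htypes]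

theorem atomWeight_nonneg (hμ : ∀ i, 0 ≤ μ i) (hα0 : ∀ i j, 0 ≤ α i j) (hα1 : ∀ i j, α i j ≤ 1)
    (t : Fin n → Fin r) (σ : Fin n → Finset (Fin P)) (b : Fin n → Fin n → Bool) :
    0 ≤ atomWeight μ α P K t σ b := by
  refine mul_nonneg (mul_nonneg (prod_nonneg fun x _ => hμ _)
    (prod_nonneg fun x _ => keyRingProb_nonneg _ _ _))
    (prod_nonneg fun x _ => prod_nonneg fun y _ => ?_)
  unfold channelProb; split_ifs <;> linarith [hα0 (t x) (t y), hα1 (t x) (t y)]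

theorem ofReal_sum_le_measure_of_cover {X ι : Type*} [MeasurableSpace X] {ν : Measure X}
    [IsProbabilityMeasure ν] [Fintype ι] {E : ι → Set X} {w : ι → ℝ} (hw : ∀ i, 0 ≤ w i)
    (hsum : ∑ i, w i = 1) (hE : ∀ i, ν (E i) ≤ ENNReal.ofReal (w i)) {good : ι → Prop}
    [DecidablePred good] {A : Set X} (hA : ∀ x ∉ A, ∃ i, ¬good i ∧ x ∈ E i) :
    ENNReal.ofReal (∑ i with good i, w i) ≤ ν A := by
  have hbad : ν Aᶜ ≤ ENNReal.ofReal (∑ i with ¬good i, w i) :=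
    calc ν Aᶜ ≤ ν (⋃ i ∈ univ.filter (fun i => ¬good i), E i) := measure_mono fun x hx => by
          obtain ⟨i, hi, hxi⟩ := hA x hx
          exact Set.mem_iUnion₂.2 ⟨i, by simpa using hi, hxi⟩
      _ ≤ ∑ i with ¬good i, ν (E i) := measure_biUnion_finset_le _ _
      _ ≤ ∑ i with ¬good i, ENNReal.ofReal (w i) := sum_le_sum fun i _ => hE i
      _ = ENNReal.ofReal (∑ i with ¬good i, w i) :=
          (ENNReal.ofReal_sum_of_nonneg fun i _ => hw i).symm
  refine ENNReal.le_of_add_le_add_right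
    (a := ENNReal.ofReal (∑ i with ¬good i, w i)) ENNReal.ofReal_ne_top ?_
  calc ENNReal.ofReal (∑ i with good i, w i) + ENNReal.ofReal (∑ i with ¬good i, w i)
      = ν (A ∪ Aᶜ) := by
        rw [← ENNReal.ofReal_add (sum_nonneg fun i _ => hw i) (sum_nonneg fun i _ => hw i),
          sum_filter_add_sum_filter_not, hsum, Set.union_compl_self, measure_univ,
          ENNReal.ofReal_one]
    _ ≤ ν A + ν Aᶜ := measure_union_le _ _
    _ ≤ ν A + ENNReal.ofReal (∑ i with ¬good i, w i) := by gcongr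

theorem HetModel.ofReal_le_measure_typ_eq_isolated [IsProbabilityMeasure Pr]
    (M : HetModel r n P K μ α Ω Pr) (hμ : ∀ i, 0 ≤ μ i) (hμsum : ∑ i, μ i = 1)
    (hα0 : ∀ i j, 0 ≤ α i j) (hα1 : ∀ i j, α i j ≤ 1) (hK : ∀ i j, K i + K j ≤ P) (m : Fin r)
    {z : Fin n} (hz : IsBot z) :
    ENNReal.ofReal (μ m * (1 - LamE μ α P K m) ^ (n - 1))
      ≤ Pr {ω | M.typ ω z = m ∧ M.Isolated ω z} := by
  have hcover : ∀ ω ∉ {ω | M.typ ω z = m ∧ M.Isolated ω z},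
      ∃ i : (Fin n → Fin r) × (Fin n → Finset (Fin P)) × (LtPairs n → Bool),
        ¬(i.1 z = m ∧ IsolatedIn z i.2.1 (extendPairs i.2.2)) ∧
        ω ∈ {ω | M.typ ω = i.1 ∧ M.keyring ω = i.2.1 ∧
          ∀ x y, x < y → M.chan ω x y = extendPairs i.2.2 x y} := by
    intro ω hω
    refine ⟨(M.typ ω, M.keyring ω, fun p => M.chan ω p.1.1 p.1.2), ?_,
      rfl, rfl, fun x y h => by simp [extendPairs, h]⟩
    rintro ⟨htyp, hiso⟩
    refine hω ⟨htyp, fun y ⟨hne, hN, hch⟩ => ?_⟩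
    have hzy : z < y := lt_of_le_of_ne (hz y) hne
    rw [if_pos hzy] at hch
    exact hiso y hzy ⟨hN, by simp [extendPairs, hzy, hch]⟩
  have hbound := ofReal_sum_le_measure_of_cover (hA := hcover)
    (w := fun i : (Fin n → Fin r) × (Fin n → Finset (Fin P)) × (LtPairs n → Bool) =>
      atomWeight μ α P K i.1 i.2.1 (extendPairs i.2.2))
    (fun i => atomWeight_nonneg hμ hα0 hα1 _ _ _)
    (by simpa only [Fintype.sum_prod_type] using
      sum_atomWeight (α := α) hμsum fun i => by linarith [hK i i])
    (fun i => (M.joint _ _ _).le)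
  simp only [sum_filter, Fintype.sum_prod_type] at hbound
  rwa [sum_atomWeight_isolatedIn hμsum hK hz m] at hbound

theorem n_times_expected_indicator_tendsto_top_general
    (hμpos : ∀ i, 0 < μ i) (hμsum : ∑ i, μ i = 1)
    (Pn : ℕ → ℕ) (Kn : ℕ → Fin r → ℕ)
    (hKP : ∀ n i, 2 * Kn n i ≤ Pn n)
    (αn : ℕ → Fin r → Fin r → ℝ)
    (hα0 : ∀ n i j, 0 < αn n i j) (hα1 : ∀ n i j, αn n i j < 1)
    (c : ℝ) (hc1 : c < 1) (cn : ℕ → ℝ)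
    (hcn : Tendsto cn atTop (nhds c))
    (hscal : ∀ n, 2 ≤ n →
      LamMin μ (αn n) (Pn n) (Kn n) = cn n * Real.log n / n)
    (m : ℕ → Fin r)
    (hm : ∀ n i, LamE μ (αn n) (Pn n) (Kn n) (m n) ≤ LamE μ (αn n) (Pn n) (Kn n) i)
    (Ω : ℕ → Type) [mΩ : ∀ n, MeasurableSpace (Ω n)]
    (Pr : ∀ n, Measure (Ω n)) (hPr : ∀ n, IsProbabilityMeasure (Pr n))
    (M : ∀ n, HetModel r n (Pn n) (Kn n) μ (αn n) (Ω n) (Pr n)) :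
    Tendsto
      (fun (k : ℕ) => if h : 0 < k then
          (k : ENNReal) *
            Pr k {ω | (M k).typ ω (⟨0, h⟩ : Fin k) = m k ∧
                      (M k).Isolated ω (⟨0, h⟩ : Fin k)}
        else 0)
      atTop (nhds (⊤ : ENNReal)) ∧
    Tendsto
      (fun (k : ℕ) => (k : ℝ) * μ (m k) *
        (1 - LamMin μ (αn k) (Pn k) (Kn k)) ^ (k - 1))
      atTop atTop := by
  have : Nonempty (Fin r) := ⟨m 0⟩
  obtain ⟨i₀, hi₀⟩ := Finite.exists_min μ
  have hmin : ∀ k, LamMin μ (αn k) (Pn k) (Kn k) = LamE μ (αn k) (Pn k) (Kn k) (m k) :=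
    fun k => le_antisymm (ciInf_le (Finite.bddBelow_range _) _) (le_ciInf (hm k))
  have hgrowth := tendsto_natCast_mul_one_sub_pow_atTop hc1 hcn
    ((eventually_ge_atTop 2).mono hscal)
  have hreal : Tendsto (fun k : ℕ => (k : ℝ) * μ (m k) *
      (1 - LamMin μ (αn k) (Pn k) (Kn k)) ^ (k - 1)) atTop atTop := by
    refine tendsto_atTop_mono' atTop ?_ (hgrowth.const_mul_atTop (hμpos i₀))
    filter_upwards [hgrowth.eventually_ge_atTop 0] with k hk
    nlinarith [hi₀ (m k)]
  refine ⟨tendsto_nhds_top_mono (ENNReal.tendsto_ofReal_atTop.comp hreal) ?_, hreal⟩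
  filter_upwards [eventually_gt_atTop 0] with k hk
  have := hPr k
  rw [dif_pos hk, Function.comp_apply, mul_assoc, ENNReal.ofReal_mul k.cast_nonneg,
    ENNReal.ofReal_natCast, hmin]
  gcongr
  exact (M k).ofReal_le_measure_typ_eq_isolated (fun i => (hμpos i).le) hμsum
    (fun i j => (hα0 k i j).le) (fun i j => (hα1 k i j).le)
    (fun i j => by linarith [hKP k i, hKP k j]) (m k) fun y => Nat.zero_le _

/-- under any scaling with `Λ_m(n) = c_n log n / n` and
`c_n → c ∈ (0,1)`, with `x_{n,1}` the indicator that vertex `v_1` of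
`H(n; μ, Θ_n)` has type `m(n)` and is isolated, `n·E[x_{n,1}] → ∞`;
equivalently, `n·μ_{m(n)}·(1 − Λ_m(n))^{n−1} → ∞`. -/
theorem n_times_expected_indicator_tendsto_top
    (hr : 0 < r)
    (hμpos : ∀ i, 0 < μ i) (hμsum : ∑ i, μ i = 1)
    (Pn : ℕ → ℕ) (Kn : ℕ → Fin r → ℕ)
    (hKpos : ∀ n i, 1 ≤ Kn n i)
    (hKmono : ∀ n, Monotone (Kn n))
    (hKP : ∀ n i, 2 * Kn n i ≤ Pn n)
    (αn : ℕ → Fin r → Fin r → ℝ)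
    (hα0 : ∀ n i j, 0 < αn n i j) (hα1 : ∀ n i j, αn n i j < 1)
    (hαsymm : ∀ n i j, αn n i j = αn n j i)
    (c : ℝ) (hc0 : 0 < c) (hc1 : c < 1) (cn : ℕ → ℝ)
    (hcn : Tendsto cn atTop (nhds c))
    (hscal : ∀ n, 2 ≤ n →
      LamMin μ (αn n) (Pn n) (Kn n) = cn n * Real.log n / n)
    (m : ℕ → Fin r)
    (hm : ∀ n i, LamE μ (αn n) (Pn n) (Kn n) (m n) ≤ LamE μ (αn n) (Pn n) (Kn n) i)
    (Ω : ℕ → Type) [mΩ : ∀ n, MeasurableSpace (Ω n)]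
    (Pr : ∀ n, Measure (Ω n)) (hPr : ∀ n, IsProbabilityMeasure (Pr n))
    (M : ∀ n, HetModel r n (Pn n) (Kn n) μ (αn n) (Ω n) (Pr n)) :
    Tendsto
      (fun (k : ℕ) => if h : 0 < k then
          (k : ENNReal) *
            Pr k {ω | (M k).typ ω (⟨0, h⟩ : Fin k) = m k ∧
                      (M k).Isolated ω (⟨0, h⟩ : Fin k)}
        else 0)
      atTop (nhds (⊤ : ENNReal)) ∧
    Tendsto
      (fun (k : ℕ) => (k : ℝ) * μ (m k) *
        (1 - LamMin μ (αn k) (Pn k) (Kn k)) ^ (k - 1))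
      atTop atTop :=
  n_times_expected_indicator_tendsto_top_general hμpos hμsum Pn Kn hKP αn hα0 hα1 c hc1 cn hcn hscal
    m hm Ω (mΩ := mΩ) Pr hPr M
end
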